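/- Laplace asymptotics (one-dimensional stationary phase for a non-degenerate minimum): let S : ℝ → ℝ be smooth with a unique global minimum at x₀, S''(x₀) > 0, and suppose S(x) ≥ S(x₀) + c·min(1, (x-x₀)²) for some c > 0 and e^{-S} is integrable. Then (2πt)^{-1/2} ∫_ℝ e^{-(S(x)-S(x₀))/t} dx → S''(x₀)^{-1/2} as t → 0⁺. -/

import Mathlib

open MeasureTheory Real Filter Topology

lemma laplace_cov (f : ℝ → ℝ) (x₀ : ℝ) {s : ℝ} (hs : 0 < s) :
    (∫ y : ℝ, f (x₀ + s * y)) = s⁻¹ * ∫ x, f x := by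
  have h : (∫ y : ℝ, f (x₀ + s * y)) = |s⁻¹| • ∫ x : ℝ, f (x₀ + x) :=
    MeasureTheory.Measure.integral_comp_mul_left (fun x => f (x₀ + x)) s
  rw [h, MeasureTheory.integral_add_left_eq_self f x₀, abs_of_pos (inv_pos.mpr hs), smul_eq_mul]

lemma laplace_quad (S : ℝ → ℝ) (x₀ : ℝ) (hS : ContDiff ℝ (⊤ : ℕ∞) S)
    (hmin : ∀ x, S x₀ ≤ S x) :
    Tendsto (fun h : ℝ => (S (x₀ + h) - S x₀) / h ^ 2) (𝓝[≠] (0:ℝ))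
      (nhds (iteratedDeriv 2 S x₀ / 2)) := by
  have hd : Differentiable ℝ S := hS.differentiable (by simp)
  have hS2 : ContDiff ℝ (⊤ : ℕ∞) S := hS.of_le (by simp)
  have hS' : ContDiff ℝ (⊤ : ℕ∞) (deriv S) := (contDiff_infty_iff_deriv.mp hS2).2
  have hd' : DifferentiableAt ℝ (deriv S) x₀ := (hS'.differentiable (by simp)) x₀
  have h0 : deriv S x₀ = 0 := by
    have hloc : IsLocalMin S x₀ := Filter.Eventually.of_forall hmin
    exact hloc.deriv_eq_zero
  have ha : deriv (deriv S) x₀ = iteratedDeriv 2 S x₀ := by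
    rw [iteratedDeriv_succ, iteratedDeriv_one]
  have hslope : Tendsto (fun h : ℝ => h⁻¹ * deriv S (x₀ + h)) (𝓝[≠] (0:ℝ))
      (𝓝 (iteratedDeriv 2 S x₀)) := by
    have h1 := hd'.hasDerivAt.tendsto_slope_zero
    rw [ha] at h1
    simpa [h0, smul_eq_mul] using h1
  apply HasDerivAt.lhopital_zero_nhdsNE (f' := fun h => deriv S (x₀ + h)) (g' := fun h => 2 * h)
  · refine Filter.Eventually.of_forall fun h => ?_
    exact ((hd (x₀ + h)).hasDerivAt.comp_const_add x₀ h).sub_const (S x₀)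
  · refine Filter.Eventually.of_forall fun h => ?_
    simpa using hasDerivAt_pow 2 h
  · exact eventually_mem_nhdsWithin.mono fun h hh =>
      mul_ne_zero two_ne_zero (by simpa using hh)
  · have : Tendsto (fun h : ℝ => S (x₀ + h) - S x₀) (𝓝 0) (𝓝 (S (x₀ + 0) - S x₀)) :=
      (((hS.continuous.comp (continuous_const.add continuous_id)).sub continuous_const).tendsto 0)
    simpa using this.mono_left nhdsWithin_le_nhds
  · have : Tendsto (fun h : ℝ => h ^ 2) (𝓝 0) (𝓝 ((0:ℝ) ^ 2)) := (continuous_pow 2).tendsto 0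
    simpa using this.mono_left nhdsWithin_le_nhds
  · refine (hslope.div_const 2).congr fun h => ?_
    rw [div_eq_mul_inv, div_eq_mul_inv, mul_inv]
    ring

/-- One-dimensional Laplace asymptotics (stationary phase for a non-degenerate minimum):
if `S` is smooth with unique global minimum at `x₀`, `S''(x₀) > 0`, a quadratic growth bound,
and `e^{-S}` integrable, then
`(2πt)^{-1/2} ∫ e^{-(S(x)-S(x₀))/t} dx → S''(x₀)^{-1/2}` as `t → 0⁺`. -/
theorem laplace_asymptotics_one_dim (S : ℝ → ℝ) (x₀ : ℝ)
    (hS : ContDiff ℝ (⊤ : ℕ∞) S)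
    (hmin : ∀ x, x ≠ x₀ → S x₀ < S x)
    (hnondeg : 0 < iteratedDeriv 2 S x₀)
    (c : ℝ) (hc : 0 < c)
    (hgrowth : ∀ x, S x₀ + c * min 1 ((x - x₀) ^ 2) ≤ S x)
    (hint : Integrable (fun x => Real.exp (-S x))) :
    Tendsto (fun t : ℝ =>
        (2 * π * t) ^ (-(1:ℝ) / 2) * ∫ x, Real.exp (-(S x - S x₀) / t))
      (nhdsWithin 0 (Set.Ioi 0))
      (nhds ((iteratedDeriv 2 S x₀) ^ (-(1:ℝ) / 2))) := by
  set a := iteratedDeriv 2 S x₀ with ha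
  have hmin' : ∀ x, S x₀ ≤ S x := by
    intro x
    rcases eq_or_ne x x₀ with h | h
    · rw [h]
    · exact (hmin x h).le
  set F : ℝ → ℝ → ℝ := fun t y => Real.exp (-(S (x₀ + Real.sqrt t * y) - S x₀) / t) with hFdef
  set G : ℝ → ℝ → ℝ := fun t y => if t * y ^ 2 ≤ 1 then F t y else 0 with hGdef
  set H : ℝ → ℝ → ℝ := fun t y => if t * y ^ 2 ≤ 1 then 0 else F t y with hHdef
  -- integrability facts
  have hint0 : Integrable (fun x => Real.exp (-(S x - S x₀))) := by
    have he : (fun x => Real.exp (-(S x - S x₀))) = fun x => Real.exp (S x₀) * Real.exp (-S x) := by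
      funext x; rw [← Real.exp_add]; ring_nf
    rw [he]; exact hint.const_mul _
  have hK0 : 0 ≤ ∫ x, Real.exp (-(S x - S x₀)) := integral_nonneg fun x => (Real.exp_pos _).le
  have hintt : ∀ t ∈ Set.Ioc (0:ℝ) 1, Integrable (fun x => Real.exp (-(S x - S x₀) / t)) := by
    intro t ht
    refine hint0.mono ?_ ?_
    · exact (Real.continuous_exp.comp
        (((hS.continuous.sub continuous_const).neg).div_const t)).aestronglyMeasurable
    · refine Filter.Eventually.of_forall fun x => ?_
      rw [Real.norm_eq_abs, abs_of_pos (Real.exp_pos _), Real.norm_eq_abs,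
        abs_of_pos (Real.exp_pos _)]
      apply Real.exp_le_exp.mpr
      have h1 : 0 ≤ S x - S x₀ := sub_nonneg.mpr (hmin' x)
      have h2 : S x - S x₀ ≤ (S x - S x₀) / t := by
        rw [le_div_iff₀ ht.1]
        nlinarith [ht.2]
      rw [neg_div]
      linarith
  have hFint : ∀ t ∈ Set.Ioc (0:ℝ) 1, Integrable (F t) := by
    intro t ht
    have h1 : Integrable (fun x => Real.exp (-(S (x₀ + x) - S x₀) / t)) :=
      (hintt t ht).comp_add_left x₀
    exact h1.comp_mul_left' (Real.sqrt_pos.mpr ht.1).ne'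
  have hFcont : ∀ t : ℝ, Continuous (F t) :=
    fun t => Real.continuous_exp.comp
      (((hS.continuous.comp (continuous_const.add (continuous_const.mul continuous_id))).sub
        continuous_const).neg.div_const t)
  have hset : ∀ t : ℝ, MeasurableSet {y : ℝ | t * y ^ 2 ≤ 1} :=
    fun t => measurableSet_le (by fun_prop) measurable_const
  have hGind : ∀ t : ℝ, G t = Set.indicator {y : ℝ | t * y ^ 2 ≤ 1} (F t) := by
    intro t; funext y
    simp [hGdef, Set.indicator_apply, Set.mem_setOf_eq]
  have hGint : ∀ t ∈ Set.Ioc (0:ℝ) 1, Integrable (G t) := by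
    intro t ht
    rw [hGind t]
    exact (hFint t ht).indicator (hset t)
  have hHint : ∀ t ∈ Set.Ioc (0:ℝ) 1, Integrable (H t) := by
    intro t ht
    have he : H t = fun y => F t y - G t y := by
      funext y; by_cases h : t * y ^ 2 ≤ 1 <;> simp [hHdef, hGdef, h]
    rw [he]
    exact (hFint t ht).sub (hGint t ht)
  have hsplit : ∀ t ∈ Set.Ioc (0:ℝ) 1, (∫ y, F t y) = (∫ y, G t y) + ∫ y, H t y := by
    intro t ht
    rw [← integral_add (hGint t ht) (hHint t ht)]
    congr 1; funext y
    by_cases h : t * y ^ 2 ≤ 1 <;> simp [hGdef, hHdef, h]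
  have hcov : ∀ t ∈ Set.Ioc (0:ℝ) 1,
      (∫ x, Real.exp (-(S x - S x₀) / t)) = Real.sqrt t * ∫ y, F t y := by
    intro t ht
    have hs : Real.sqrt t ≠ 0 := (Real.sqrt_pos.mpr ht.1).ne'
    have h : (∫ y : ℝ, F t y) = (Real.sqrt t)⁻¹ * ∫ x, Real.exp (-(S x - S x₀) / t) :=
      laplace_cov (fun x => Real.exp (-(S x - S x₀) / t)) x₀ (Real.sqrt_pos.mpr ht.1)
    rw [h, ← mul_assoc, mul_inv_cancel₀ hs, one_mul]
  -- dominated convergence for G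
  have hGtend : Tendsto (fun t => ∫ y, G t y) (𝓝[>] (0:ℝ))
      (𝓝 (∫ y : ℝ, Real.exp (-(a / 2) * y ^ 2))) := by
    apply tendsto_integral_filter_of_dominated_convergence (fun y => Real.exp (-c * y ^ 2))
    · refine eventually_mem_nhdsWithin.mono fun t (ht : t ∈ Set.Ioi (0:ℝ)) => ?_
      rw [hGind t]
      exact ((hFcont t).aestronglyMeasurable).indicator (hset t)
    · refine eventually_mem_nhdsWithin.mono fun t (ht : t ∈ Set.Ioi (0:ℝ)) => ?_
      refine Filter.Eventually.of_forall fun y => ?_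
      by_cases h : t * y ^ 2 ≤ 1
      · have hx : (x₀ + Real.sqrt t * y - x₀) ^ 2 = t * y ^ 2 := by
          rw [add_sub_cancel_left, mul_pow, Real.sq_sqrt ht.out.le]
        have hgr := hgrowth (x₀ + Real.sqrt t * y)
        rw [hx, min_eq_right h] at hgr
        have h2 : -(S (x₀ + Real.sqrt t * y) - S x₀) / t ≤ -c * y ^ 2 := by
          rw [div_le_iff₀ ht.out]
          nlinarith [ht.out]
        simp only [hGdef, if_pos h, Real.norm_eq_abs, abs_of_pos (Real.exp_pos _)]
        exact (abs_of_pos (Real.exp_pos _)).trans_le (Real.exp_le_exp.mpr h2)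
      · simp only [hGdef, if_neg h, norm_zero]
        positivity
    · exact integrable_exp_neg_mul_sq hc
    · refine Filter.Eventually.of_forall fun y => ?_
      rcases eq_or_ne y 0 with rfl | hy
      · have he : ∀ᶠ t in 𝓝[>] (0:ℝ), (1:ℝ) = G t 0 := by
          refine eventually_mem_nhdsWithin.mono fun t (ht : t ∈ Set.Ioi (0:ℝ)) => ?_
          simp [hGdef, hFdef]
        have h1 : Real.exp (-(a / 2) * (0:ℝ) ^ 2) = 1 := by norm_num
        rw [h1]
        exact Tendsto.congr' he tendsto_const_nhds
      · have hcomp : Tendsto (fun t : ℝ => Real.sqrt t * y) (𝓝[>] (0:ℝ)) (𝓝[≠] (0:ℝ)) := by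
          rw [tendsto_nhdsWithin_iff]
          constructor
          · have h1 : Tendsto (fun t : ℝ => Real.sqrt t) (𝓝[>] (0:ℝ)) (𝓝 0) := by
              have := (Real.continuous_sqrt.tendsto 0).mono_left (nhdsWithin_le_nhds (s := Set.Ioi (0:ℝ)))
              simpa using this
            simpa using h1.mul_const y
          · refine eventually_mem_nhdsWithin.mono fun t (ht : t ∈ Set.Ioi (0:ℝ)) => ?_
            simp only [Set.mem_compl_iff, Set.mem_singleton_iff]
            exact mul_ne_zero (Real.sqrt_pos.mpr ht.out).ne' hy
        have hinner : Tendsto (fun t => (S (x₀ + Real.sqrt t * y) - S x₀) / t) (𝓝[>] (0:ℝ))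
            (𝓝 (a / 2 * y ^ 2)) := by
          have h1 := ((laplace_quad S x₀ hS hmin').comp hcomp).mul_const (y ^ 2)
          refine Tendsto.congr' ?_ h1
          refine eventually_mem_nhdsWithin.mono fun t (ht : t ∈ Set.Ioi (0:ℝ)) => ?_
          show (S (x₀ + Real.sqrt t * y) - S x₀) / (Real.sqrt t * y) ^ 2 * y ^ 2 = _
          rw [mul_pow, Real.sq_sqrt ht.out.le]
          have hy2 : y ^ 2 ≠ 0 := pow_ne_zero 2 hy
          field_simp
        have hev : ∀ᶠ t in 𝓝[>] (0:ℝ), F t y = G t y := by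
          have h2 : ∀ᶠ t in 𝓝[>] (0:ℝ), t < 1 / y ^ 2 :=
            eventually_nhdsWithin_of_eventually_nhds
              (eventually_lt_nhds (by positivity : (0:ℝ) < 1 / y ^ 2))
          filter_upwards [h2] with t h2
          have hle : t * y ^ 2 ≤ 1 := by
            rw [lt_div_iff₀ (by positivity : (0:ℝ) < y ^ 2)] at h2
            linarith
          simp [hGdef, hle]
        refine Tendsto.congr' hev ?_
        have h3 := (hinner.neg).rexp
        rw [show -(a / 2 * y ^ 2) = -(a / 2) * y ^ 2 by ring] at h3
        refine h3.congr fun t => ?_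
        simp only [hFdef]
        rw [neg_div]
  -- tail estimate for H
  have hHtend : Tendsto (fun t => ∫ y, H t y) (𝓝[>] (0:ℝ)) (𝓝 0) := by
    set K := Real.exp c * ∫ x, Real.exp (-(S x - S x₀)) with hKdef
    have hKpos : 0 ≤ K := mul_nonneg (Real.exp_pos _).le hK0
    apply squeeze_zero' (g := fun t : ℝ => K * ((1 / t) ^ ((1:ℝ)/2) * Real.exp (-c * (1 / t))))
    · refine Filter.Eventually.of_forall fun t => integral_nonneg fun y => ?_
      by_cases h : t * y ^ 2 ≤ 1 <;> simp [hHdef, h, (Real.exp_pos _).le] <;> exact (Real.exp_pos _).le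
    · filter_upwards [Ioc_mem_nhdsGT one_pos] with t ht
      have hs : 0 < Real.sqrt t := Real.sqrt_pos.mpr ht.1
      have hbd : ∀ y, H t y ≤
          Real.exp (-(1 / t - 1) * c) * Real.exp (-(S (x₀ + Real.sqrt t * y) - S x₀)) := by
        intro y
        by_cases h : t * y ^ 2 ≤ 1
        · simp only [hHdef, if_pos h]; positivity
        · simp only [hHdef, if_neg h]
          push_neg at h
          have hx2 : (x₀ + Real.sqrt t * y - x₀) ^ 2 = t * y ^ 2 := by
            rw [add_sub_cancel_left, mul_pow, Real.sq_sqrt ht.1.le]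
          have hge : c ≤ S (x₀ + Real.sqrt t * y) - S x₀ := by
            have hgr := hgrowth (x₀ + Real.sqrt t * y)
            rw [hx2, min_eq_left h.le] at hgr
            linarith
          rw [← Real.exp_add]
          apply Real.exp_le_exp.mpr
          have h1t : 1 ≤ 1 / t := by
            rw [le_div_iff₀ ht.1]; linarith [ht.2]
          have hA : (S (x₀ + Real.sqrt t * y) - S x₀) + (1 / t - 1) * c
              ≤ (S (x₀ + Real.sqrt t * y) - S x₀) / t := by
            have hkey : (S (x₀ + Real.sqrt t * y) - S x₀) / t
                = (S (x₀ + Real.sqrt t * y) - S x₀) * (1 / t) := div_eq_mul_one_div _ _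
            rw [hkey]
            nlinarith [mul_nonneg (sub_nonneg.mpr hge) (sub_nonneg.mpr h1t)]
          rw [neg_div]
          linarith
      have hrint : Integrable (fun y => Real.exp (-(S (x₀ + Real.sqrt t * y) - S x₀))) :=
        (hint0.comp_add_left x₀).comp_mul_left' hs.ne'
      have hHle : (∫ y, H t y) ≤ Real.exp (-(1 / t - 1) * c) *
          ∫ y, Real.exp (-(S (x₀ + Real.sqrt t * y) - S x₀)) := by
        rw [← integral_const_mul]
        exact integral_mono (hHint t ht) (hrint.const_mul _) hbd
      have hcov2 : (∫ y : ℝ, Real.exp (-(S (x₀ + Real.sqrt t * y) - S x₀)))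
          = (Real.sqrt t)⁻¹ * ∫ x, Real.exp (-(S x - S x₀)) :=
        laplace_cov (fun x => Real.exp (-(S x - S x₀))) x₀ hs
      rw [hcov2] at hHle
      refine hHle.trans (le_of_eq ?_)
      have e1 : Real.exp (-(1 / t - 1) * c) = Real.exp c * Real.exp (-c * (1 / t)) := by
        rw [← Real.exp_add]; congr 1; ring
      have e2 : ((1:ℝ) / t) ^ ((1:ℝ)/2) = (Real.sqrt t)⁻¹ := by
        rw [← Real.sqrt_eq_rpow, one_div, Real.sqrt_inv]
      rw [e1, e2, hKdef]
      ring
    · have h1 := tendsto_rpow_mul_exp_neg_mul_atTop_nhds_zero ((1:ℝ)/2) c hc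
      have h2 : Tendsto (fun t : ℝ => 1 / t) (𝓝[>] (0:ℝ)) atTop := by
        simpa [one_div] using tendsto_inv_nhdsGT_zero (𝕜 := ℝ)
      have h3 := (h1.comp h2).const_mul K
      simpa using h3
  -- final assembly
  have hfinal : ((2 * π : ℝ)) ^ (-(1:ℝ)/2) * ((∫ y : ℝ, Real.exp (-(a / 2) * y ^ 2)) + 0)
      = a ^ (-(1:ℝ)/2) := by
    rw [add_zero, integral_gaussian (a / 2)]
    have h2 : π / (a / 2) = 2 * π / a := by
      rw [div_div_eq_mul_div]; ring_nf
    rw [h2, show (-(1:ℝ)/2) = -(1/2 : ℝ) by norm_num,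
      Real.rpow_neg (by positivity), Real.rpow_neg hnondeg.le,
      ← Real.sqrt_eq_rpow, ← Real.sqrt_eq_rpow,
      Real.sqrt_div (by positivity : (0:ℝ) ≤ 2 * π)]
    have h0 : Real.sqrt (2 * π) ≠ 0 := by positivity
    have h0' : Real.sqrt a ≠ 0 := (Real.sqrt_pos.mpr hnondeg).ne'
    field_simp
  have heq : ∀ᶠ t in 𝓝[>] (0:ℝ),
      (2 * π : ℝ) ^ (-(1:ℝ)/2) * ((∫ y, G t y) + ∫ y, H t y)
        = (2 * π * t) ^ (-(1:ℝ)/2) * ∫ x, Real.exp (-(S x - S x₀) / t) := by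
    filter_upwards [Ioc_mem_nhdsGT one_pos] with t ht
    rw [hcov t ht, hsplit t ht, ← mul_assoc]
    congr 1
    rw [Real.mul_rpow (by positivity) ht.1.le, Real.sqrt_eq_rpow,
      show (-(1:ℝ)/2) = -(1/2 : ℝ) by norm_num, mul_assoc, ← Real.rpow_add ht.1]
    norm_num
  have hmain := (hGtend.add hHtend).const_mul ((2 * π : ℝ) ^ (-(1:ℝ)/2))
  rw [hfinal] at hmain
  exact Tendsto.congr' heq hmain
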